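/- arXiv:1307.0120 — 6 statements merged into one kernel-verified Lean document; each statement's English description precedes it below -/
import Mathlib

section
/- Let (X,f) be a dynamical system with X a compact metric space and f : X → X continuous, and let A ⊆ X be a set containing the measure center of f. Then for every ε > 0 there exists N ∈ ℕ such that for every x ∈ X and every n ≥ N, (1/n)·#{0 ≤ i < n : dist(f^i(x), A) < ε} > 1 − ε. -/
open Filter Metric Set MeasureTheory Topology

section Defs

variable {X : Type*} [MetricSpace X]

/-- The Bowen ball of radius `ε` centered at `x` along a finite set of times `Λ`. -/
def bowenBallAlong (f : X → X) (Λ : Finset ℕ) (x : X) (ε : ℝ) : Set X :=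
  {y | ∀ j ∈ Λ, dist (f^[j] x) (f^[j] y) < ε}

/-- `g` is a mistake function with threshold `ε₀`. -/
structure IsMistakeFun (g : ℕ → ℝ → ℕ) (ε₀ : ℝ) : Prop where
  pos : 0 < ε₀
  mono : ∀ n : ℕ, ∀ ε : ℝ, 0 < ε → ε ≤ ε₀ → g n ε ≤ g (n + 1) ε
  small : ∀ ε : ℝ, 0 < ε → ε ≤ ε₀ →
    Tendsto (fun n : ℕ => (g n ε : ℝ) / n) atTop (nhds 0)
  ext : ∀ n : ℕ, ∀ ε : ℝ, ε₀ < ε → g n ε = g n ε₀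

/-- The `(g;n,ε)`-Bowen ball `B_n(g;x,ε)`: union of Bowen balls along all
`Λ ⊆ {0,…,n-1}` with `#Λ ≥ n - g(n,ε)`. -/
def mistakeBowenBall (f : X → X) (g : ℕ → ℝ → ℕ) (n : ℕ) (x : X) (ε : ℝ) : Set X :=
  ⋃ Λ ∈ {Λ : Finset ℕ | Λ ⊆ Finset.range n ∧ n - g n ε ≤ Λ.card},
    bowenBallAlong f Λ x ε

/-- Almost specification property with given mistake function `g` and gap function `kg`. -/
def AlmostSpecWith (f : X → X) (g : ℕ → ℝ → ℕ) (kg : ℝ → ℕ) : Prop :=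
  ∀ m : ℕ, 1 ≤ m → ∀ (ε : ℕ → ℝ) (x : ℕ → X) (nseq : ℕ → ℕ),
    (∀ j, 1 ≤ j → j ≤ m → 0 < ε j) →
    (∀ j, 1 ≤ j → j ≤ m → kg (ε j) ≤ nseq j) →
    ∃ z : X, ∀ j, 1 ≤ j → j ≤ m →
      f^[∑ s ∈ Finset.Ico 1 j, nseq s] z ∈ mistakeBowenBall f g (nseq j) (x j) (ε j)

/-- The almost specification property. -/
def AlmostSpec (f : X → X) : Prop :=
  ∃ (g : ℕ → ℝ → ℕ) (ε₀ : ℝ) (kg : ℝ → ℕ),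
    IsMistakeFun g ε₀ ∧ AlmostSpecWith f g kg

/-- `{x_n}` is a `δ`-average-pseudo-orbit of `f`. -/
def AvgPseudoOrbit (f : X → X) (δ : ℝ) (x : ℕ → X) : Prop :=
  ∃ N : ℕ, 0 < N ∧ ∀ n : ℕ, N ≤ n → ∀ k : ℕ,
    (∑ i ∈ Finset.range n, dist (f (x (i + k))) (x (i + k + 1))) / n < δ

/-- `{x_n}` is `ε`-shadowed in average by `y`. -/
def ShadowedInAvg (f : X → X) (ε : ℝ) (x : ℕ → X) (y : X) : Prop :=
  limsup (fun n : ℕ => (∑ i ∈ Finset.range n, dist (f^[i] y) (x i)) / n) atTop < ε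

/-- The average shadowing property. -/
def AvgShadowing (f : X → X) : Prop :=
  ∀ ε : ℝ, 0 < ε → ∃ δ : ℝ, 0 < δ ∧
    ∀ x : ℕ → X, AvgPseudoOrbit f δ x → ∃ y : X, ShadowedInAvg f ε x y

/-- `{x_n}` is an asymptotic average pseudo-orbit of `f`. -/
def AsympAvgPseudoOrbit (f : X → X) (x : ℕ → X) : Prop :=
  Tendsto (fun n : ℕ => (∑ i ∈ Finset.range n, dist (f (x i)) (x (i + 1))) / n)
    atTop (nhds 0)

/-- `{x_n}` is asymptotically shadowed in average by `y`. -/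
def AsympShadowedInAvg (f : X → X) (x : ℕ → X) (y : X) : Prop :=
  Tendsto (fun n : ℕ => (∑ i ∈ Finset.range n, dist (f^[i] y) (x i)) / n)
    atTop (nhds 0)

/-- The asymptotic average shadowing property. -/
def AsympAvgShadowing (f : X → X) : Prop :=
  ∀ x : ℕ → X, AsympAvgPseudoOrbit f x → ∃ y : X, AsympShadowedInAvg f x y

/-- An infinite `δ`-pseudo-orbit. -/
def PseudoOrbit (f : X → X) (δ : ℝ) (x : ℕ → X) : Prop :=
  ∀ i : ℕ, dist (f (x i)) (x (i + 1)) < δ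

/-- There exists a finite `δ`-pseudo-orbit of length `n` from `x` to `y`. -/
def FinChain (f : X → X) (δ : ℝ) (n : ℕ) (x y : X) : Prop :=
  ∃ c : ℕ → X, c 0 = x ∧ c n = y ∧ ∀ i < n, dist (f (c i)) (c (i + 1)) < δ

/-- Chain transitivity. -/
def ChainTransitive (f : X → X) : Prop :=
  ∀ δ : ℝ, 0 < δ → ∀ x y : X, ∃ n : ℕ, 0 < n ∧ FinChain f δ n x y

/-- Chain mixing. -/
def ChainMixing (f : X → X) : Prop :=
  ∀ δ : ℝ, 0 < δ → ∀ x y : X, ∃ N : ℕ, 0 < N ∧ ∀ n : ℕ, N ≤ n → FinChain f δ n x y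

/-- The shadowing property. -/
def Shadowing (f : X → X) : Prop :=
  ∀ ε : ℝ, 0 < ε → ∃ δ : ℝ, 0 < δ ∧
    ∀ x : ℕ → X, PseudoOrbit f δ x → ∃ z : X, ∀ i : ℕ, dist (f^[i] z) (x i) < ε

/-- The limit shadowing property. -/
def LimitShadowing (f : X → X) : Prop :=
  ∀ x : ℕ → X, Tendsto (fun i : ℕ => dist (f (x i)) (x (i + 1))) atTop (nhds 0) →
    ∃ z : X, Tendsto (fun i : ℕ => dist (f^[i] z) (x i)) atTop (nhds 0)

/-- Topological transitivity. -/
def TopTransitive {Y : Type*} [TopologicalSpace Y] (f : Y → Y) : Prop :=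
  ∀ U V : Set Y, IsOpen U → IsOpen V → U.Nonempty → V.Nonempty →
    ∃ n : ℕ, 0 < n ∧ (f^[n] '' U ∩ V).Nonempty

/-- Total transitivity. -/
def TotallyTransitive {Y : Type*} [TopologicalSpace Y] (f : Y → Y) : Prop :=
  ∀ n : ℕ, 1 ≤ n → TopTransitive f^[n]

/-- Topological weak mixing: `f × f` is transitive. -/
def WeaklyMixing {Y : Type*} [TopologicalSpace Y] (f : Y → Y) : Prop :=
  TopTransitive (Prod.map f f)

/-- Topological mixing. -/
def TopMixing {Y : Type*} [TopologicalSpace Y] (f : Y → Y) : Prop :=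
  ∀ U V : Set Y, IsOpen U → IsOpen V → U.Nonempty → V.Nonempty →
    ∃ N : ℕ, 0 < N ∧ ∀ n : ℕ, N ≤ n → (f^[n] '' U ∩ V).Nonempty

/-- The forward orbit of a point. -/
def fOrbit (f : X → X) (x : X) : Set X := Set.range fun n : ℕ => f^[n] x

/-- `x` is a minimal point of `f`: every point of the orbit closure of `x`
has orbit dense in that orbit closure. -/
def MinimalPoint (f : X → X) (x : X) : Prop :=
  ∀ y ∈ closure (fOrbit f x), closure (fOrbit f x) ⊆ closure (fOrbit f y)

variable [MeasurableSpace X]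

/-- `μ` is an `f`-invariant Borel probability measure. -/
def InvariantProb (f : X → X) (μ : Measure X) : Prop :=
  IsProbabilityMeasure μ ∧ ∀ B : Set X, MeasurableSet B → μ (f ⁻¹' B) = μ B

/-- A set is universally null if it has measure zero for every invariant
probability measure. -/
def UnivNull (f : X → X) (U : Set X) : Prop :=
  ∀ μ : Measure X, InvariantProb f μ → μ U = 0

/-- The measure center: complement of the union of all universally null open sets. -/
def measureCenter (f : X → X) : Set X :=
  (⋃ U ∈ {U : Set X | IsOpen U ∧ UnivNull f U}, U)ᶜ

/-- `μ` has full support. -/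
def FullSupport (μ : Measure X) : Prop :=
  ∀ U : Set X, IsOpen U → U.Nonempty → 0 < μ U

end Defs

section Visits

variable {X : Type*} [MetricSpace X]

/-- The set of visiting times `N(x,U)`. -/
def visitTimes (f : X → X) (x : X) (U : Set X) : Set ℕ :=
  {n : ℕ | 0 < n ∧ f^[n] x ∈ U}

/-- `η(n,U) = max_{x ∈ X} #(N(x,U) ∩ {0,…,n-1})`. -/
noncomputable def eta (f : X → X) (U : Set X) (n : ℕ) : ℕ :=
  sSup {k : ℕ | ∃ x : X, k = (visitTimes f x U ∩ Set.Iio n).ncard}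

/-- The visit frequency `ξ(U) = inf_{n>0} η(n,U)/n`. -/
noncomputable def xi (f : X → X) (U : Set X) : ℝ :=
  ⨅ n : ℕ, (eta f U (n + 1) : ℝ) / (n + 1)

/-- `J ⊆ ℕ` has asymptotic density `a`. -/
def HasDensity (J : Set ℕ) (a : ℝ) : Prop :=
  Tendsto (fun n : ℕ => ((J ∩ Set.Iio n).ncard : ℝ) / n) atTop (nhds a)

/-- Upper asymptotic density of a set of naturals. -/
noncomputable def upperDensity (J : Set ℕ) : ℝ :=
  limsup (fun n : ℕ => ((J ∩ Set.Iio n).ncard : ℝ) / n) atTop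

end Visits

/-! If a closed set `F` were visited with frequency at least `ε` along arbitrarily long orbit
segments, a weak-* limit point of the corresponding empirical measures would be an invariant
probability measure (Krylov–Bogolyubov) with `μ F ≥ ε` (portmanteau theorem for closed sets). By
Lindelöf, the complement of the measure center is a countable union of universally null open sets,
so no such `F` can lie outside the measure center. Apply this to `F = {y | ε ≤ dist(y, A)}`. -/

open scoped ENNReal

section Empirical

variable {X : Type*} [MeasurableSpace X]

noncomputable def empiricalMeasure (f : X → X) (x : X) (n : ℕ) : Measure X :=
  (n : ℝ≥0∞)⁻¹ • ∑ i ∈ Finset.range n, Measure.dirac (f^[i] x)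

variable (f : X → X) (x : X) {n : ℕ}

theorem isProbabilityMeasure_empiricalMeasure (hn : n ≠ 0) :
    IsProbabilityMeasure (empiricalMeasure f x n) := by
  constructor
  simp [empiricalMeasure, Measure.finsetSum_apply, ENNReal.inv_mul_cancel, hn]

theorem empiricalMeasure_apply {s : Set X} (hs : MeasurableSet s) :
    empiricalMeasure f x n s = {i | i < n ∧ f^[i] x ∈ s}.ncard / n := by
  classical
  have hcount : {i | i < n ∧ f^[i] x ∈ s} = ((Finset.range n).filter (f^[·] x ∈ s) : Set ℕ) := by
    ext i; simp
  rw [hcount, Set.ncard_coe_finset, empiricalMeasure, Measure.smul_apply,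
    Measure.finsetSum_apply]
  simp only [Measure.dirac_apply' _ hs, Set.indicator_apply, Pi.one_apply]
  rw [Finset.sum_boole]
  simp [ENNReal.div_eq_inv_mul]

theorem integral_empiricalMeasure [MeasurableSingletonClass X] (g : X → ℝ) :
    ∫ y, g y ∂empiricalMeasure f x n = (∑ i ∈ Finset.range n, g (f^[i] x)) / n := by
  rw [empiricalMeasure, integral_smul_measure,
    integral_finsetSum_measure fun i _ => integrable_dirac enorm_lt_top]
  simp [integral_dirac, div_eq_inv_mul]

theorem integral_comp_sub_integral_empiricalMeasure [MeasurableSingletonClass X] (g : X → ℝ) :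
    ∫ y, g (f y) ∂empiricalMeasure f x n - ∫ y, g y ∂empiricalMeasure f x n
      = (g (f^[n] x) - g x) / n := by
  rw [integral_empiricalMeasure, integral_empiricalMeasure, ← sub_div, ← Finset.sum_sub_distrib]
  simp_rw [← Function.iterate_succ_apply' f]
  rw [Finset.sum_range_sub (fun i => g (f^[i] x)), Function.iterate_zero_apply]

variable {f x} in
theorem ofReal_le_empiricalMeasure {s : Set X} (hs : MeasurableSet s)
    (hn : n ≠ 0) {ε : ℝ} (h : ε * n ≤ {i | i < n ∧ f^[i] x ∈ s}.ncard) :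
    ENNReal.ofReal ε ≤ empiricalMeasure f x n s := by
  have hpos : (0 : ℝ) < n := by positivity
  rw [empiricalMeasure_apply f x hs, ← ENNReal.ofReal_natCast, ← ENNReal.ofReal_natCast,
    ← ENNReal.ofReal_div_of_pos hpos]
  exact ENNReal.ofReal_le_ofReal ((le_div_iff₀ hpos).2 h)

end Empirical

section Invariant

variable {X : Type*} [MetricSpace X] [MeasurableSpace X] [BorelSpace X] {f : X → X}

theorem invariantProb_of_tendsto_empiricalMeasure (hf : Continuous f) {ι : Type*} {L : Filter ι}
    [L.NeBot] {x : ι → X} {n : ι → ℕ} (hn : Tendsto n L atTop) {μs : ι → ProbabilityMeasure X}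
    (hμs : ∀ k, (μs k : Measure X) = empiricalMeasure f (x k) (n k))
    {μ : ProbabilityMeasure X} (hμ : Tendsto μs L (𝓝 μ)) : InvariantProb f μ := by
  have hlim := ProbabilityMeasure.tendsto_iff_forall_integral_tendsto.mp hμ
  have hmap : (μ : Measure X).map f = μ := by
    refine ext_of_forall_integral_eq_of_IsFiniteMeasure fun g => ?_
    rw [integral_map hf.aemeasurable g.continuous.aestronglyMeasurable]
    have hgap : Tendsto (fun k => (g (f^[n k] (x k)) - g (x k)) / n k) L (𝓝 0) := by
      refine squeeze_zero_norm (fun k => ?_)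
        ((tendsto_const_div_atTop_nhds_zero_nat (2 * ‖g‖)).comp hn)
      rw [norm_div, Real.norm_natCast, ← dist_eq_norm]
      exact div_le_div_of_nonneg_right (g.dist_le_two_norm _ _) (Nat.cast_nonneg _)
    refine tendsto_nhds_unique (hlim (g.compContinuous ⟨f, hf⟩)) ?_
    simpa [hμs, ← integral_comp_sub_integral_empiricalMeasure] using (hlim g).add hgap
  exact ⟨inferInstance, fun B hB => by rw [← Measure.map_apply hf.measurable hB, hmap]⟩

end Invariant

section MeasureCenter

variable {X : Type*} [MetricSpace X] [MeasurableSpace X] (f : X → X)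

theorem univNull_compl_measureCenter [SecondCountableTopology X] :
    UnivNull f (measureCenter f)ᶜ := by
  obtain ⟨T, hTS, hTc, hT⟩ := TopologicalSpace.isOpen_biUnion_countable
    {U : Set X | IsOpen U ∧ UnivNull f U} (fun U => U) fun U hU => hU.1
  intro μ hμ
  rw [measureCenter, compl_compl, ← hT]
  exact (measure_biUnion_null_iff hTc).2 fun U hU => (hTS hU).2 μ hμ

end MeasureCenter

section Frequency

variable {X : Type*} [MetricSpace X] [CompactSpace X] [MeasurableSpace X] [BorelSpace X]
  {f : X → X} {F : Set X}

theorem exists_invariantProb_le_measure_of_frequently_visits (hf : Continuous f)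
    (hF : IsClosed F) {ε : ℝ}
    (h : ∀ N, ∃ x n, N ≤ n ∧ ε * n ≤ {i | i < n ∧ f^[i] x ∈ F}.ncard) :
    ∃ μ : ProbabilityMeasure X, InvariantProb f μ ∧ ENNReal.ofReal ε ≤ (μ : Measure X) F := by
  choose x n hn hvisits using fun k : ℕ => h (k + 1)
  have hn0 : ∀ k, n k ≠ 0 := fun k => by have := hn k; omega
  let μs : ℕ → ProbabilityMeasure X := fun k =>
    ⟨empiricalMeasure f (x k) (n k), isProbabilityMeasure_empiricalMeasure _ _ (hn0 k)⟩
  obtain ⟨𝒰, h𝒰⟩ := exists_ultrafilter_le (atTop : Filter ℕ)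
  obtain ⟨μ, -, hμ⟩ := isCompact_univ.ultrafilter_le_nhds (𝒰.map μs) (by simp)
  have hnlim : Tendsto n 𝒰 atTop :=
    (tendsto_atTop_mono (fun k => (hn k).trans' k.le_succ) tendsto_id).mono_left h𝒰
  refine ⟨μ, invariantProb_of_tendsto_empiricalMeasure hf hnlim (fun _ => rfl) hμ, ?_⟩
  refine le_trans ?_ (ProbabilityMeasure.limsup_measure_closed_le_of_tendsto hμ hF)
  exact le_limsup_of_frequently_le' (Frequently.of_forall fun k =>
    ofReal_le_empiricalMeasure hF.measurableSet (hn0 k) (hvisits k))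

theorem exists_visits_lt_of_isClosed_of_univNull (hf : Continuous f) (hF : IsClosed F)
    (hnull : UnivNull f F) {ε : ℝ} (hε : 0 < ε) :
    ∃ N, ∀ x n, N ≤ n → ({i | i < n ∧ f^[i] x ∈ F}.ncard : ℝ) < ε * n := by
  by_contra! h
  obtain ⟨μ, hμ, hεμ⟩ := exists_invariantProb_le_measure_of_frequently_visits hf hF h
  rw [hnull μ hμ, nonpos_iff_eq_zero, ENNReal.ofReal_eq_zero] at hεμ
  linarith

end Frequency

/-- A set containing the measure center is visited (up to `ε`)
with frequency at least `1 - ε`, uniformly in the starting point. -/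
theorem measureCenter_visit_frequency
    {X : Type*} [MetricSpace X] [CompactSpace X] [MeasurableSpace X] [BorelSpace X]
    (f : X → X) (hf : Continuous f)
    (A : Set X) (hA : measureCenter f ⊆ A) :
    ∀ ε : ℝ, 0 < ε → ∃ N : ℕ, ∀ x : X, ∀ n : ℕ, N ≤ n →
      1 - ε < (({i : ℕ | i < n ∧ Metric.infDist (f^[i] x) A < ε}).ncard : ℝ) / n := by
  intro ε hε
  set F : Set X := {y | infDist y A < ε}ᶜ
  have hF : IsClosed F := (isOpen_lt (continuous_infDist_pt A) continuous_const).isClosed_compl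
  have hFcenter : F ⊆ (measureCenter f)ᶜ := fun y hyF hy =>
    hyF (show infDist y A < ε by rwa [infDist_zero_of_mem (hA hy)])
  have hFnull : UnivNull f F := fun μ hμ =>
    measure_mono_null hFcenter (univNull_compl_measureCenter f μ hμ)
  obtain ⟨N, hN⟩ := exists_visits_lt_of_isClosed_of_univNull hf hF hFnull hε
  refine ⟨max N 1, fun x n hn => ?_⟩
  have hfar := hN x n (le_of_max_le_left hn)
  have hsplit : ({i | i < n ∧ infDist (f^[i] x) A < ε}.ncard : ℝ)
      + {i | i < n ∧ f^[i] x ∈ F}.ncard = n := by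
    have hcount := Set.ncard_inter_add_ncard_sdiff_eq_ncard (Iio n) {i | infDist (f^[i] x) A < ε}
    rw [Set.ncard_Iio_nat] at hcount
    exact_mod_cast hcount
  have hpos : (0 : ℝ) < n := by have := le_of_max_le_right hn; positivity
  rw [lt_div_iff₀ hpos]
  linarith
end

section
/- Let (X,f) be a dynamical system with X a compact metric space and f : X → X a continuous surjection. If f has the average shadowing property, then f is chain mixing. -/
open Filter Metric Set MeasureTheory Topology

/-!
Average shadowing passes to `f × f`, and chain transitivity of `f × f` implies chain mixing of
`f`: chains of `f × f` from `(x, f x)` to `(x, x)` give loops at `x` of the coprime lengths `m`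
and `m + 1`, and every length `≥ m * m` is a sum of these.

Chain transitivity from `x` to `y`: pick `q` with `f^[L - 1] q = y` and concatenate the orbit
segments `x, …, f^[L - 1] x` and `q, …, f^[L - 1] q` alternately. This sequence jumps only once
every `L` steps, so for large `L` it is an average pseudo-orbit. A point `z` shadowing it in
average comes `ε`-close to it at some time `i` of an `x`-block and at a later time `j` of a
`q`-block; following the orbit of `x`, then that of `z` from time `i` to time `j`, then that of
`q` up to `y` gives the chain.
-/

section FinChain

variable {X Y : Type*} [MetricSpace X] [MetricSpace Y] {f : X → X} {δ : ℝ}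

theorem finChain_zero (u : X) : FinChain f δ 0 u u :=
  ⟨fun _ => u, rfl, rfl, by omega⟩

theorem finChain_succ_iff {n : ℕ} {u w : X} :
    FinChain f δ (n + 1) u w ↔ ∃ v, dist (f u) v < δ ∧ FinChain f δ n v w := by
  constructor
  · rintro ⟨c, rfl, rfl, hc⟩
    exact ⟨c 1, hc 0 (by omega), fun t => c (t + 1), rfl, rfl, fun i hi => hc (i + 1) (by omega)⟩
  · rintro ⟨v, hv, c, rfl, rfl, hc⟩
    refine ⟨fun t => if t = 0 then u else c (t - 1), rfl, by simp, fun i hi => ?_⟩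
    rcases i with _ | i
    · simpa using hv
    · simpa using hc i (by omega)

theorem FinChain.cons {n : ℕ} {u v w : X} (huv : dist (f u) v < δ) (h : FinChain f δ n v w) :
    FinChain f δ (n + 1) u w :=
  finChain_succ_iff.2 ⟨v, huv, h⟩

theorem FinChain.trans {m n : ℕ} {u v w : X} (h₁ : FinChain f δ m u v)
    (h₂ : FinChain f δ n v w) : FinChain f δ (m + n) u w := by
  induction m generalizing u with
  | zero => obtain ⟨c, rfl, rfl, -⟩ := h₁; simpa using h₂
  | succ m ih =>
    obtain ⟨u', hu', h₁⟩ := finChain_succ_iff.1 h₁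
    rw [Nat.add_right_comm]
    exact (ih h₁).cons hu'

theorem FinChain.nsmul {n : ℕ} {u : X} (h : FinChain f δ n u u) (k : ℕ) :
    FinChain f δ (k * n) u u := by
  induction k with
  | zero => simpa using finChain_zero u
  | succ k ih => simpa [Nat.succ_mul] using ih.trans h

theorem finChain_iterate (hδ : 0 < δ) (n : ℕ) (u : X) : FinChain f δ n u (f^[n] u) := by
  induction n generalizing u with
  | zero => exact finChain_zero u
  | succ n ih => exact (ih (f u)).cons (by simpa using hδ)

theorem finChain_of_near_orbit {n : ℕ} {u v p : X} (hu : dist (f u) (f p) < δ / 2)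
    (hv : dist (f^[n + 1] p) v < δ / 2) : FinChain f δ (n + 1) u v := by
  induction n generalizing u p with
  | zero =>
    refine (finChain_zero v).cons ?_
    rw [zero_add, Function.iterate_one] at hv
    linarith [dist_triangle (f u) (f p) v]
  | succ n ih =>
    have hδ : 0 < δ := by linarith [dist_nonneg.trans_lt hu]
    exact (ih (u := f p) (p := f p) (by simpa using hδ) hv).cons (by linarith)

theorem FinChain.map {g : Y → Y} {π : Y → X} (hπ : LipschitzWith 1 π)
    (hsc : Function.Semiconj π g f) {n : ℕ} {p q : Y} (h : FinChain g δ n p q) :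
    FinChain f δ n (π p) (π q) := by
  obtain ⟨c, rfl, rfl, hc⟩ := h
  refine ⟨π ∘ c, rfl, rfl, fun i hi => ?_⟩
  simpa [← hsc (c i)] using (hπ.dist_le_mul _ _).trans_lt (by simpa using hc i hi)

end FinChain

theorem exists_mul_add_mul_succ_eq {m k : ℕ} (hm : 0 < m) (hk : m * m ≤ k) :
    ∃ p q, p * m + q * (m + 1) = k := by
  have hmod : k % m < m := Nat.mod_lt k hm
  have hdiv : m ≤ k / m := (Nat.le_div_iff_mul_le hm).2 hk
  refine ⟨k / m - k % m, k % m, ?_⟩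
  calc (k / m - k % m) * m + k % m * (m + 1) = (k / m - k % m + k % m) * m + k % m := by ring
    _ = k := by rw [Nat.sub_add_cancel (by omega), Nat.div_add_mod']

section ChainMixing

variable {X : Type*} [MetricSpace X] {f : X → X} {δ : ℝ}

theorem FinChain.consecutive_of_prodMap (hδ : 0 < δ) {n : ℕ} {u v : X}
    (h : FinChain (Prod.map f f) δ n (u, f u) (v, v)) :
    FinChain f δ n u v ∧ FinChain f δ (n + 1) u v :=
  ⟨h.map (π := Prod.fst) LipschitzWith.prod_fst fun _ => rfl,
    (h.map (π := Prod.snd) LipschitzWith.prod_snd fun _ => rfl).cons (by simpa using hδ)⟩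

theorem ChainTransitive.chainMixing_of_prodMap (h : ChainTransitive (Prod.map f f)) :
    ChainMixing f := by
  intro δ hδ x y
  obtain ⟨m, hm, hloop⟩ := h δ hδ (x, f x) (x, x)
  obtain ⟨a, -, hxy⟩ := h δ hδ (x, f x) (y, y)
  obtain ⟨hloop₀, hloop₁⟩ := hloop.consecutive_of_prodMap hδ
  refine ⟨m * m + a, by positivity, fun n hn => ?_⟩
  obtain ⟨p, q, hpq⟩ := exists_mul_add_mul_succ_eq hm (Nat.le_sub_of_add_le hn)
  have hchain := ((hloop₀.nsmul p).trans (hloop₁.nsmul q)).trans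
    (hxy.consecutive_of_prodMap hδ).1
  rwa [hpq, Nat.sub_add_cancel (by omega)] at hchain

end ChainMixing

theorem dist_le_diam_univ {X : Type*} [MetricSpace X] [BoundedSpace X] (a b : X) :
    dist a b ≤ diam (univ : Set X) :=
  dist_le_diam_of_mem (Bornology.isBounded_univ.2 ‹_›) (mem_univ a) (mem_univ b)

theorem avg_le_of_forall_le {v : ℕ → ℝ} {C : ℝ} (hC : 0 ≤ C) (hv : ∀ i, v i ≤ C) (n : ℕ) :
    (∑ i ∈ Finset.range n, v i) / n ≤ C := by
  rcases n.eq_zero_or_pos with rfl | hn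
  · simpa using hC
  · rw [div_le_iff₀ (by positivity)]
    simpa [mul_comm] using Finset.sum_le_card_nsmul (Finset.range n) v C fun i _ => hv i

section AverageShadowing

variable {X Y : Type*} [MetricSpace X] [MetricSpace Y] {f : X → X} {ε δ : ℝ}

theorem ShadowedInAvg.eventually_lt [BoundedSpace X] {x : ℕ → X} {y : X}
    (h : ShadowedInAvg f ε x y) :
    ∀ᶠ n in atTop, (∑ i ∈ Finset.range n, dist (f^[i] y) (x i)) / n < ε :=
  eventually_lt_of_limsup_lt h <| isBoundedUnder_of ⟨diam (univ : Set X),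
    avg_le_of_forall_le diam_nonneg fun _ => dist_le_diam_univ _ _⟩

theorem shadowedInAvg_of_eventually_le {x : ℕ → X} {y : X} {ε' : ℝ}
    (h : ∀ᶠ n in atTop, (∑ i ∈ Finset.range n, dist (f^[i] y) (x i)) / n ≤ ε')
    (hε : ε' < ε) : ShadowedInAvg f ε x y :=
  (limsup_le_of_le (isBoundedUnder_of ⟨0, fun _ => by positivity⟩).isCoboundedUnder_le h).trans_lt
    hε

theorem AvgPseudoOrbit.map {g : Y → Y} {π : Y → X} (hπ : LipschitzWith 1 π)
    (hsc : Function.Semiconj π g f) {x : ℕ → Y} (h : AvgPseudoOrbit g δ x) :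
    AvgPseudoOrbit f δ (π ∘ x) := by
  obtain ⟨N, hN, hx⟩ := h
  refine ⟨N, hN, fun n hn k => lt_of_le_of_lt ?_ (hx n hn k)⟩
  gcongr with i
  simpa [← hsc _] using hπ.dist_le_mul (g (x (i + k))) (x (i + k + 1))

theorem AvgPseudoOrbit.mono {δ' : ℝ} {x : ℕ → X} (h : AvgPseudoOrbit f δ x) (hδ : δ ≤ δ') :
    AvgPseudoOrbit f δ' x :=
  let ⟨N, hN, hx⟩ := h
  ⟨N, hN, fun n hn k => (hx n hn k).trans_le hδ⟩

theorem AvgShadowing.prodMap [BoundedSpace X] [BoundedSpace Y] {g : Y → Y}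
    (hf : AvgShadowing f) (hg : AvgShadowing g) : AvgShadowing (Prod.map f g) := by
  intro ε hε
  obtain ⟨δ₁, hδ₁, hf⟩ := hf (ε / 3) (by positivity)
  obtain ⟨δ₂, hδ₂, hg⟩ := hg (ε / 3) (by positivity)
  refine ⟨min δ₁ δ₂, lt_min hδ₁ hδ₂, fun p hp => ?_⟩
  obtain ⟨y₁, hy₁⟩ := hf _ <| (hp.map (π := Prod.fst) LipschitzWith.prod_fst fun _ => rfl).mono
    (min_le_left _ _)
  obtain ⟨y₂, hy₂⟩ := hg _ <| (hp.map (π := Prod.snd) LipschitzWith.prod_snd fun _ => rfl).mono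
    (min_le_right _ _)
  refine ⟨(y₁, y₂), shadowedInAvg_of_eventually_le (ε' := 2 * ε / 3) ?_ (by linarith)⟩
  filter_upwards [hy₁.eventually_lt, hy₂.eventually_lt] with n h₁ h₂
  calc (∑ i ∈ Finset.range n, dist ((Prod.map f g)^[i] (y₁, y₂)) (p i)) / n
      ≤ (∑ i ∈ Finset.range n, dist (f^[i] y₁) (p i).1) / n
        + (∑ i ∈ Finset.range n, dist (g^[i] y₂) (p i).2) / n := by
        rw [← add_div, ← Finset.sum_add_distrib]
        gcongr with i
        rw [Prod.map_iterate, Prod.dist_eq]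
        exact max_le_add_of_nonneg dist_nonneg dist_nonneg
    _ ≤ 2 * ε / 3 := (add_lt_add h₁ h₂).le.trans_eq (by ring)

end AverageShadowing

theorem card_filter_dvd_add_succ_le (L n k : ℕ) :
    ((Finset.range n).filter (fun i => L ∣ i + k + 1)).card ≤ n / L + 1 := by
  have h := Nat.card_multiples (k + n) L
  rw [Finset.card_filter, Finset.sum_range_add, ← Finset.card_filter, ← Finset.card_filter,
    Nat.card_multiples] at h
  simp only [add_comm k] at h
  have := Nat.add_div_le_div_add_div_add_one n k L
  omega

theorem iterate_mod_succ_of_not_dvd {X : Type*} (f : X → X) (b : ℕ → X) {L i : ℕ}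
    (h : ¬ L ∣ i + 1) : f^[(i + 1) % L] (b ((i + 1) / L)) = f (f^[i % L] (b (i / L))) := by
  have hdiv : (i + 1) / L = i / L := Nat.succ_div_of_not_dvd h
  have hmod : (i + 1) % L = i % L + 1 := by
    have h₁ := Nat.mod_add_div (i + 1) L
    have h₂ := Nat.mod_add_div i L
    rw [hdiv] at h₁
    omega
  rw [hdiv, hmod, Function.iterate_succ_apply']

section OrbitSegments

variable {X : Type*} [MetricSpace X] {f : X → X}

theorem avgPseudoOrbit_orbitSegments [BoundedSpace X] {β : ℝ} (hβ : 0 < β) {L : ℕ}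
    (hL : 2 * diam (univ : Set X) < β * L) (b : ℕ → X) :
    AvgPseudoOrbit f β (fun i => f^[i % L] (b (i / L))) := by
  set C := diam (univ : Set X)
  have hC : 0 ≤ C := diam_nonneg
  have hL₀ : (0 : ℝ) < L := pos_of_mul_pos_right (hL.trans_le' (by positivity)) hβ.le
  have hjump : ∀ i, dist (f (f^[i % L] (b (i / L)))) (f^[(i + 1) % L] (b ((i + 1) / L))) ≤
      if L ∣ i + 1 then C else 0 := by
    intro i
    split_ifs with h
    · exact dist_le_diam_univ _ _
    · rw [iterate_mod_succ_of_not_dvd f b h, dist_self]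
  obtain ⟨N, hN⟩ := exists_nat_gt (2 * C / β)
  refine ⟨N + 1, N.succ_pos, fun n hn k => ?_⟩
  have hn₀ : (0 : ℝ) < n := by exact_mod_cast (N.succ_pos.trans_le hn)
  have hCn : 2 * C < β * n := by
    rw [div_lt_iff₀ hβ] at hN
    nlinarith [show (N : ℝ) + 1 ≤ n by exact_mod_cast hn]
  have hsum : ∑ i ∈ Finset.range n, dist (f (f^[(i + k) % L] (b ((i + k) / L))))
      (f^[(i + k + 1) % L] (b ((i + k + 1) / L))) ≤ C * ((n / L : ℕ) + 1 : ℕ) := by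
    calc _ ≤ ∑ i ∈ Finset.range n, if L ∣ i + k + 1 then C else 0 :=
          Finset.sum_le_sum fun i _ => hjump (i + k)
      _ = C * ((Finset.range n).filter (fun i => L ∣ i + k + 1)).card := by
          rw [Finset.sum_ite, Finset.sum_const_zero, add_zero, Finset.sum_const, nsmul_eq_mul,
            mul_comm]
      _ ≤ C * ((n / L : ℕ) + 1 : ℕ) := by
          gcongr
          exact_mod_cast card_filter_dvd_add_succ_le L n k
  calc _ ≤ C * ((n / L : ℕ) + 1 : ℕ) / n := by gcongr
    _ ≤ C * (n / L + 1) / n := by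
        gcongr
        push_cast
        gcongr
        exact Nat.cast_div_le
    _ = C / L + C / n := by field_simp
    _ < β / 2 + β / 2 :=
        add_lt_add (by rw [div_lt_iff₀ hL₀]; linarith) (by rw [div_lt_iff₀ hn₀]; linarith)
    _ = β := add_halves β

end OrbitSegments

theorem exists_ge_lt_of_eventually_avg_lt {d : ℕ → ℝ} (hd : ∀ i, 0 ≤ d i) {ε : ℝ}
    (havg : ∀ᶠ n in atTop, (∑ i ∈ Finset.range n, d i) / n < ε / 4) {L e : ℕ} (hL : 0 < L)
    (he : e < 2) (M : ℕ) : ∃ i, M ≤ i ∧ i / L % 2 = e ∧ d i < ε := by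
  by_contra! hbig
  obtain ⟨N, hN⟩ := eventually_atTop.1 havg
  set K := M + N + 1
  set n := L * (2 * (M + K))
  -- the indices `g (t, s)` with `t < K`, `s < L` are distinct, lie below `n`, beyond `M`,
  -- and in blocks of parity `e`, so at least `K * L` summands are `≥ ε`
  set g : ℕ × ℕ → ℕ := fun ts => ts.2 + L * (2 * (M + ts.1) + e)
  set S := Finset.range K ×ˢ Finset.range L
  have hg : ∀ ts ∈ S, g ts / L = 2 * (M + ts.1) + e ∧ g ts % L = ts.2 := by
    intro ts hts
    have hs : ts.2 < L := (Finset.mem_product.1 hts).2 |> Finset.mem_range.1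
    refine ⟨?_, ?_⟩
    · rw [Nat.add_mul_div_left _ _ hL, Nat.div_eq_of_lt hs, zero_add]
    · rw [Nat.add_mul_mod_self_left, Nat.mod_eq_of_lt hs]
  have hinj : Set.InjOn g S := fun a ha b hb hab => by
    have := hg a ha; have := hg b hb; rw [hab] at *; ext <;> omega
  have hsub : S.image g ⊆ Finset.range n := by
    simp only [Finset.subset_iff, Finset.mem_image, Finset.mem_range, S, Finset.mem_product]
    rintro _ ⟨⟨t, s⟩, ⟨ht, hs⟩, rfl⟩
    calc s + L * (2 * (M + t) + e) < L * (2 * (M + t) + e + 1) := by rw [mul_add_one]; omega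
      _ ≤ n := Nat.mul_le_mul_left L (by omega)
  have hlow : ε * (K * L) ≤ ∑ i ∈ Finset.range n, d i := by
    calc ε * (K * L) = ∑ _i ∈ S.image g, ε := by
          rw [Finset.sum_const, Finset.card_image_of_injOn hinj, Finset.card_product,
            Finset.card_range, Finset.card_range, nsmul_eq_mul]
          push_cast; ring
      _ ≤ ∑ i ∈ S.image g, d i := Finset.sum_le_sum fun i hi => by
          obtain ⟨ts, hts, rfl⟩ := Finset.mem_image.1 hi
          have hblock := (hg ts hts).1
          have hle : 2 * (M + ts.1) + e ≤ g ts :=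
            (Nat.le_mul_of_pos_left _ hL).trans (Nat.le_add_left _ _)
          exact hbig _ (by omega) (by omega)
      _ ≤ ∑ i ∈ Finset.range n, d i :=
          Finset.sum_le_sum_of_subset_of_nonneg hsub fun _ _ _ => hd _
  have hup := hN n ((Nat.le_mul_of_pos_left _ hL).trans' (by omega))
  rw [div_lt_iff₀ (by positivity)] at hup
  have hn : (n : ℝ) = L * (2 * (M + K)) := by push_cast [n]; ring
  have hMK : (M : ℝ) + 1 ≤ K := by exact_mod_cast (show M + 1 ≤ K by omega)
  have hL₀ : (0 : ℝ) < L := by exact_mod_cast hL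
  have hsum₀ : 0 ≤ ∑ i ∈ Finset.range n, d i := Finset.sum_nonneg fun i _ => hd i
  rw [hn] at hup
  nlinarith

section ChainTransitive

variable {X : Type*} [MetricSpace X] [CompactSpace X] {f : X → X}

theorem AvgShadowing.chainTransitive (hf : Continuous f) (hsurj : Function.Surjective f)
    (h : AvgShadowing f) : ChainTransitive f := by
  intro δ hδ x y
  obtain ⟨ε₀, hε₀, hfε₀⟩ := Metric.uniformContinuous_iff.1
    (CompactSpace.uniformContinuous_of_continuous hf) (δ / 2) (by positivity)
  set ε := min ε₀ (δ / 2)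
  obtain ⟨β, hβ, hsh⟩ := h (ε / 4) (by positivity)
  obtain ⟨L, hL⟩ := exists_nat_gt (2 * diam (univ : Set X) / β)
  rw [div_lt_iff₀ hβ, mul_comm (L : ℝ)] at hL
  have hL₀ : 0 < L := by exact_mod_cast pos_of_mul_pos_right (hL.trans_le' (by positivity)) hβ.le
  obtain ⟨q, rfl⟩ := hsurj.iterate (L - 1) y
  obtain ⟨z, hz⟩ := hsh _ (avgPseudoOrbit_orbitSegments hβ hL fun t => if t % 2 = 0 then x else q)
  obtain ⟨i, -, hi_block, hi⟩ :=
    exists_ge_lt_of_eventually_avg_lt (fun _ => dist_nonneg) hz.eventually_lt hL₀ two_pos 0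
  obtain ⟨j, hij, hj_block, hj⟩ :=
    exists_ge_lt_of_eventually_avg_lt (fun _ => dist_nonneg) hz.eventually_lt hL₀ one_lt_two (i + 1)
  simp only [hi_block, hj_block, if_true, one_ne_zero, if_false] at hi hj
  have hjL := Nat.mod_lt j hL₀
  refine ⟨i % L + (j - i - 1 + 1) + (L - 1 - j % L), by omega, ?_⟩
  refine ((finChain_iterate hδ _ x).trans
    (finChain_of_near_orbit (p := f^[i] z) (v := f^[j % L] q) ?_ ?_)).trans ?_
  · exact hfε₀ ((dist_comm _ _).trans_lt hi |>.trans_le (min_le_left _ _))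
  · rw [← Function.iterate_add_apply, show j - i - 1 + 1 + i = j by omega]
    exact hj.trans_le (min_le_right _ _)
  · have hrest := finChain_iterate hδ (L - 1 - j % L) (f^[j % L] q) (f := f)
    rwa [← Function.iterate_add_apply, show L - 1 - j % L + j % L = L - 1 by omega] at hrest

end ChainTransitive

/-- A continuous surjection of a compact metric space with the
average shadowing property is chain mixing. -/
theorem avgShadowing_implies_chainMixing
    {X : Type*} [MetricSpace X] [CompactSpace X]
    (f : X → X) (hf : Continuous f) (hsurj : Function.Surjective f)
    (h : AvgShadowing f) : ChainMixing f :=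
  ((h.prodMap h).chainTransitive (hf.prodMap hf) (hsurj.prodMap hsurj)).chainMixing_of_prodMap
end

section
/- Let (X,f) be a dynamical system with X a compact metric space and f : X → X a continuous surjection. If f has the almost specification property, then f is chain mixing. -/
open Filter Metric Set MeasureTheory Topology

/-!
Almost specification lets a single point `z` follow the orbit of `x` for `M` steps and then a
preimage `w` of `y` under `f^[n - M]` for the remaining `n - M` steps, each time up to a sublinear
number of mistakes. Once the mistake budget is below the segment length, `z` is `ε`-close to the
orbit of `x` at some time `i < M` and `f^[M] z` is `ε`-close to the orbit of `w` at some time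
`k < n - M`. Following the orbit of `x` up to time `i`, then that of `z` up to time `M + k`, then
that of `w`, gives a `δ`-chain of length exactly `n` from `x` to `y`, the two jumps being `δ`-small
by uniform continuity of `f`.
-/

section Chains

variable {X : Type*} [MetricSpace X] {f : X → X} {δ : ℝ}

theorem FinChain.iterate (hδ : 0 < δ) (n : ℕ) (x : X) : FinChain f δ n x (f^[n] x) :=
  ⟨fun t => f^[t] x, rfl, rfl, fun t _ => by
    rwa [← Function.iterate_succ_apply' f t x, dist_self]⟩

theorem FinChain.one {x y : X} (h : dist (f x) y < δ) : FinChain f δ 1 x y :=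
  ⟨fun t => if t = 0 then x else y, rfl, rfl, fun t ht => by
    obtain rfl : t = 0 := Nat.lt_one_iff.mp ht
    simpa using h⟩

theorem FinChain.trans_s14 {m n : ℕ} {x y z : X} (hxy : FinChain f δ m x y)
    (hyz : FinChain f δ n y z) : FinChain f δ (m + n) x z := by
  obtain ⟨c, hc0, hcm, hc⟩ := hxy
  obtain ⟨d, hd0, hdn, hd⟩ := hyz
  refine ⟨fun t => if t ≤ m then c t else d (t - m), by simp [hc0], by
    rcases Nat.eq_zero_or_pos n with rfl | hn
    · simp [hcm, ← hd0, hdn]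
    · simp [show ¬ m + n ≤ m by omega, hdn], fun t ht => ?_⟩
  rcases lt_or_ge t m with htm | htm
  · simpa [htm.le, Nat.succ_le_of_lt htm] using hc t htm
  · have hstep := hd (t - m) (by omega)
    rcases htm.eq_or_lt with rfl | htm
    · simpa [hcm, hd0] using hstep
    · simpa [htm.not_ge, show ¬ t + 1 ≤ m by omega, show t + 1 - m = t - m + 1 by omega]
        using hstep

theorem FinChain.iterate_of_dist_iterate_lt {ε : ℝ} (hδ : 0 < δ)
    (hf : ∀ a b : X, dist a b < ε → dist (f a) (f b) < δ) {n i : ℕ} (hi : i < n) {x x' : X}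
    (hclose : dist (f^[i] x) (f^[i] x') < ε) : FinChain f δ n x (f^[n] x') := by
  have hjump : FinChain f δ 1 (f^[i] x) (f^[i + 1] x') := by
    refine FinChain.one ?_
    rw [Function.iterate_succ_apply']
    exact hf _ _ hclose
  have htail := FinChain.iterate (f := f) hδ (n - (i + 1)) (f^[i + 1] x')
  rw [← Function.iterate_add_apply, Nat.sub_add_cancel hi] at htail
  have := ((FinChain.iterate (f := f) hδ i x).trans_s14 hjump).trans_s14 htail
  rwa [show i + 1 + (n - (i + 1)) = n by omega] at this

end Chains

section AlmostSpec

variable {X : Type*} [MetricSpace X] {f : X → X} {g : ℕ → ℝ → ℕ}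

theorem IsMistakeFun.eventually_lt {ε₀ : ℝ} (hg : IsMistakeFun g ε₀) {ε : ℝ} (hε : 0 < ε) :
    ∀ᶠ n in atTop, g n ε < n := by
  wlog hεε₀ : ε ≤ ε₀ generalizing ε
  · simpa only [hg.ext _ _ (not_le.mp hεε₀)] using this hg.pos le_rfl
  filter_upwards [(hg.small ε hε hεε₀).eventually (gt_mem_nhds one_pos),
    eventually_gt_atTop 0] with n hn hn0
  exact_mod_cast (div_lt_one (by exact_mod_cast hn0)).mp hn

theorem exists_dist_iterate_lt_of_mem_mistakeBowenBall {n : ℕ} {ε : ℝ} {x y : X}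
    (hgn : g n ε < n) (hy : y ∈ mistakeBowenBall f g n x ε) :
    ∃ i < n, dist (f^[i] x) (f^[i] y) < ε := by
  simp only [mistakeBowenBall, mem_iUnion, mem_ofPred_eq] at hy
  obtain ⟨Λ, ⟨hΛn, hΛcard⟩, hyΛ⟩ := hy
  obtain ⟨i, hi⟩ := Finset.card_pos.mp (by omega : 0 < Λ.card)
  exact ⟨i, Finset.mem_range.mp (hΛn hi), hyΛ i hi⟩

theorem AlmostSpecWith.exists_two {kg : ℝ → ℕ} (h : AlmostSpecWith f g kg) {ε : ℝ} (hε : 0 < ε)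
    {n₁ n₂ : ℕ} (hn₁ : kg ε ≤ n₁) (hn₂ : kg ε ≤ n₂) (x₁ x₂ : X) :
    ∃ z, z ∈ mistakeBowenBall f g n₁ x₁ ε ∧ f^[n₁] z ∈ mistakeBowenBall f g n₂ x₂ ε := by
  obtain ⟨z, hz⟩ := h 2 one_le_two (fun _ => ε) (fun j => if j = 1 then x₁ else x₂)
    (fun j => if j = 1 then n₁ else n₂) (fun _ _ _ => hε)
    (fun j _ _ => by split_ifs <;> assumption)
  refine ⟨z, by simpa using hz 1 le_rfl one_le_two, ?_⟩
  simpa [show Finset.Ico 1 2 = {1} from rfl] using hz 2 one_le_two le_rfl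

end AlmostSpec

/-- A continuous surjection of a compact metric space with the
almost specification property is chain mixing. -/
theorem almostSpec_implies_chainMixing
    {X : Type*} [MetricSpace X] [CompactSpace X]
    (f : X → X) (hf : Continuous f) (hsurj : Function.Surjective f)
    (h : AlmostSpec f) : ChainMixing f := by
  obtain ⟨g, ε₀, kg, hg, hspec⟩ := h
  intro δ hδ x y
  obtain ⟨ε, hε, hfε⟩ := Metric.uniformContinuous_iff.mp
    (CompactSpace.uniformContinuous_of_continuous hf) δ hδ
  obtain ⟨M, hM⟩ := eventually_atTop.mp
    ((hg.eventually_lt hε).and (eventually_ge_atTop (kg ε)))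
  have hM0 : 0 < M := (Nat.zero_le _).trans_lt (hM M le_rfl).1
  refine ⟨2 * M, by omega, fun n hn => ?_⟩
  obtain ⟨w, rfl⟩ := hsurj.iterate (n - M) y
  obtain ⟨z, hzx, hzw⟩ := hspec.exists_two hε (hM M le_rfl).2 (hM (n - M) (by omega)).2 x w
  obtain ⟨i, hiM, hi⟩ := exists_dist_iterate_lt_of_mem_mistakeBowenBall (hM M le_rfl).1 hzx
  obtain ⟨k, hkn, hk⟩ :=
    exists_dist_iterate_lt_of_mem_mistakeBowenBall (hM (n - M) (by omega)).1 hzw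
  have hchain₁ := FinChain.iterate_of_dist_iterate_lt hδ hfε hiM hi
  have hchain₂ := FinChain.iterate_of_dist_iterate_lt hδ hfε hkn (by rwa [dist_comm])
  simpa [show M + (n - M) = n by omega] using hchain₁.trans_s14 hchain₂
end

section
/- Let (X,f) be a dynamical system with X a compact metric space and f : X → X continuous. If f is chain mixing and {x_j}_{j≥0} is an asymptotic average pseudo-orbit of f, then there exists an asymptotic pseudo-orbit {y_j}_{j≥0} of f such that the set {j ∈ ℕ : x_j ≠ y_j} has asymptotic density zero. -/
open Filter Metric Set MeasureTheory Topology

/-! Compactness makes chain mixing uniform: for every `δ > 0` there is `N` such that any two points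
are joined by a `δ`-chain of every length `≥ N`. Cut `ℕ` into consecutive blocks whose level `k`
grows slowly, a block of level `k` having the uniform length `N_k` for `δ_k = 1/(k+1)`. Keep `x` on
every block where all its jumps are `< δ_k`, and elsewhere replace it by a `δ_k`-chain with the same
endpoints; the result is an asymptotic pseudo-orbit. Every replaced block contains a jump `≥ δ_k`,
so by Markov's inequality at most `2 N_k δ_k⁻¹ ∑_{i<n+N_k} d(f x_i, x_{i+1})` indices below `n`
are replaced; the sum is `o(n)`, hence so is this bound when the levels grow slowly enough. -/

namespace FinChain

variable {X : Type*} [MetricSpace X] {f : X → X} {δ ε : ℝ} {n : ℕ} {u v w : X}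

theorem cons_s15 (hu : dist (f u) v < δ) (h : FinChain f δ n v w) : FinChain f δ (n + 1) u w := by
  obtain ⟨c, hc0, hcn, hc⟩ := h
  refine ⟨fun i => if i = 0 then u else c (i - 1), rfl, by simpa using hcn, fun i hi => ?_⟩
  rcases i with _ | i
  · simpa [hc0] using hu
  · simpa using hc i (by omega)

theorem retarget (hn : 0 < n) (h : FinChain f δ n u v) (hvw : dist v w < ε) :
    FinChain f (δ + ε) n u w := by
  obtain ⟨c, hc0, hcn, hc⟩ := h
  refine ⟨Function.update c n w, by rw [Function.update_of_ne hn.ne, hc0], by simp,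
    fun i hi => ?_⟩
  rw [Function.update_of_ne hi.ne]
  rcases eq_or_ne (i + 1) n with rfl | hne
  · rw [Function.update_self]
    calc dist (f (c i)) w ≤ dist (f (c i)) (c (i + 1)) + dist (c (i + 1)) w := dist_triangle ..
      _ < δ + ε := by have := hc i hi; rw [hcn] at this ⊢; linarith
  · rw [Function.update_of_ne hne]
    linarith [hc i hi, dist_nonneg (x := v) (y := w)]

end FinChain

namespace ChainMixing

variable {X : Type*} [MetricSpace X] [CompactSpace X] {f : X → X}

theorem exists_uniform (hcm : ChainMixing f) {δ : ℝ} (hδ : 0 < δ) :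
    ∃ N, ∀ n ≥ N, ∀ u v, FinChain f δ n u v := by
  -- go from `u` in one step to a `δ/2`-net point `p` near `f u`, chain to a net point `q` near `v`,
  -- and redirect the last step to `v`
  obtain ⟨t, -, hcover⟩ := isCompact_univ.elim_nhds_subcover (fun p : X => ball p (δ / 2))
    fun p _ => ball_mem_nhds p (half_pos hδ)
  choose! N hNpos hN using fun p q => hcm (δ / 2) (half_pos hδ) p q
  refine ⟨(t ×ˢ t).sup (fun pq => N pq.1 pq.2) + 1, fun n hn u v => ?_⟩
  obtain ⟨p, hp, hup⟩ := mem_iUnion₂.1 (hcover (mem_univ (f u)))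
  obtain ⟨q, hq, hvq⟩ := mem_iUnion₂.1 (hcover (mem_univ v))
  have hpq : N p q ≤ (t ×ˢ t).sup (fun pq => N pq.1 pq.2) :=
    Finset.le_sup (f := fun pq : X × X => N pq.1 pq.2) (b := (p, q)) (Finset.mem_product.2 ⟨hp, hq⟩)
  obtain ⟨m, rfl⟩ : ∃ m, n = m + 1 := ⟨n - 1, by omega⟩
  have hpv := (hN p q m (by omega)).retarget (lt_of_lt_of_le (hNpos p q) (by omega))
    (by rwa [mem_ball, dist_comm] at hvq : dist q v < δ / 2)
  rw [add_halves] at hpv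
  exact hpv.cons_s15 (by linarith [mem_ball.1 hup])

theorem exists_monotone_chainLength (hcm : ChainMixing f) {δ : ℕ → ℝ} (hδ : ∀ k, 0 < δ k) :
    ∃ N : ℕ → ℕ, Monotone N ∧ (∀ k, 0 < N k) ∧ ∀ k u v, FinChain f (δ k) (N k) u v := by
  choose N₀ hN₀ using fun k => hcm.exists_uniform (hδ k)
  refine ⟨fun k => (Finset.range (k + 1)).sup N₀ + 1, fun k l hkl => ?_, fun k => Nat.succ_pos _,
    fun k u v => hN₀ k _ ?_ u v⟩
  · exact Nat.succ_le_succ (Finset.sup_mono (Finset.range_subset_range.2 (by omega)))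
  · exact (Finset.le_sup (Finset.self_mem_range_succ k)).trans (Nat.le_succ _)

end ChainMixing

theorem exists_monotone_tendsto_atTop_eventually_diag {P : ℕ → ℕ → Prop}
    (hP : ∀ k, ∀ᶠ n in atTop, P k n) :
    ∃ L : ℕ → ℕ, Monotone L ∧ Tendsto L atTop atTop ∧ ∀ᶠ n in atTop, P (L n) n := by
  classical
  choose T hT using fun k => eventually_atTop.1 (hP k)
  refine ⟨fun n => Nat.findGreatest (fun k => T k ≤ n) n,
    fun m n hmn => Nat.findGreatest_mono (fun k hk => hk.trans hmn) hmn,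
    tendsto_atTop_atTop.2 fun k => ⟨max k (T k), fun n hn =>
      Nat.le_findGreatest (le_of_max_le_left hn) (le_of_max_le_right hn)⟩,
    eventually_atTop.2 ⟨T 0, fun n hn =>
      hT _ _ (Nat.findGreatest_spec (P := fun k => T k ≤ n) (Nat.zero_le n) hn)⟩⟩

/-- Consecutive blocks covering `ℕ`; the block starting at position `s` has length `len s`. -/
def blockStart (len : ℕ → ℕ) : ℕ → ℕ
  | 0 => 0
  | m + 1 => blockStart len m + len (blockStart len m)

open Classical in
/-- The start of the block containing `j`. -/
noncomputable def blockOf (len : ℕ → ℕ) (j : ℕ) : ℕ :=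
  Nat.findGreatest (· ∈ range (blockStart len)) j

section Blocks

open Classical

variable {len : ℕ → ℕ}

theorem monotone_blockStart : Monotone (blockStart len) :=
  monotone_nat_of_le_succ fun _ => Nat.le_add_right _ _

theorem blockOf_le (j : ℕ) : blockOf len j ≤ j := Nat.findGreatest_le j

theorem blockOf_mem_range (j : ℕ) : blockOf len j ∈ range (blockStart len) :=
  Nat.findGreatest_spec (P := (· ∈ range (blockStart len))) (Nat.zero_le j) ⟨0, rfl⟩

theorem le_blockOf {s j : ℕ} (hs : s ∈ range (blockStart len)) (hsj : s ≤ j) : s ≤ blockOf len j :=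
  Nat.le_findGreatest hsj hs

theorem blockOf_add_len_le {s j : ℕ} (hs : s ∈ range (blockStart len)) (hjs : blockOf len j < s) :
    blockOf len j + len (blockOf len j) ≤ s := by
  obtain ⟨m, hm⟩ := blockOf_mem_range (len := len) j
  obtain ⟨m', rfl⟩ := hs
  rw [← hm] at hjs ⊢
  exact monotone_blockStart (monotone_blockStart.reflect_lt hjs)

theorem lt_blockOf_add_len (hlen : ∀ s, 0 < len s) (j : ℕ) :
    j < blockOf len j + len (blockOf len j) := by
  by_contra! h
  obtain ⟨m, hm⟩ := blockOf_mem_range (len := len) j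
  have hnext : blockOf len j + len (blockOf len j) ∈ range (blockStart len) :=
    ⟨m + 1, by rw [blockStart, hm]⟩
  have := le_blockOf hnext h
  have := hlen (blockOf len j)
  omega

theorem tendsto_blockOf (hlen : ∀ s, 0 < len s) : Tendsto (blockOf len) atTop atTop := by
  have hmono : StrictMono (blockStart len) :=
    strictMono_nat_of_lt_succ fun _ => Nat.lt_add_of_pos_right (hlen _)
  refine tendsto_atTop_atTop.2 fun m => ⟨blockStart len m, fun j hj => ?_⟩
  exact (hmono.id_le m).trans (le_blockOf ⟨m, rfl⟩ hj)

/-- `j ↦ c (blockOf len j) (j - blockOf len j)` concatenates the sequences `c s`, each read on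
the block starting at `s`. -/
theorem apply_blockOf_succ (hlen : ∀ s, 0 < len s) {α : Type*} (c : ℕ → ℕ → α)
    (hc : ∀ s, c s (len s) = c (s + len s) 0) (j : ℕ) :
    c (blockOf len (j + 1)) (j + 1 - blockOf len (j + 1)) =
      c (blockOf len j) (j + 1 - blockOf len j) := by
  have hle := blockOf_le (len := len) j
  have hlt := lt_blockOf_add_len hlen j
  unfold blockOf
  rw [Nat.findGreatest_succ]
  split_ifs with hj
  · have := blockOf_add_len_le (j := j) hj (by omega)
    rw [← blockOf, show j + 1 = blockOf len j + len (blockOf len j) by omega, Nat.sub_self,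
      ← hc, Nat.add_sub_cancel_left]
  · rfl

end Blocks

section Repair

variable {X : Type*} [MetricSpace X] {f : X → X}

theorem exists_blockwise_repair {len : ℕ → ℕ} (hlen : ∀ s, 0 < len s) (hlen_mono : Monotone len)
    {η : ℕ → ℝ} (hη : Antitone η) (x : ℕ → X)
    (hchain : ∀ s, FinChain f (η s) (len s) (x s) (x (s + len s))) :
    ∃ y : ℕ → X, (∀ j, dist (f (y j)) (y (j + 1)) < η (blockOf len j)) ∧
      ∀ j n, j < n → x j ≠ y j → ∃ i, i < j + len n ∧ j < i + len n ∧
        η n ≤ dist (f (x i)) (x (i + 1)) := by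
  classical
  choose c hc0 hcl hc using hchain
  let good s : Prop := ∀ i, s ≤ i → i < s + len s → dist (f (x i)) (x (i + 1)) < η s
  -- on a block where `x` is already an `η`-chain we keep `x`, elsewhere we splice in `c s`
  let c' s : ℕ → X := if good s then fun t => x (s + t) else c s
  have hc'0 s : c' s 0 = x s := by by_cases h : good s <;> simp [c', h, hc0]
  have hc'l s : c' s (len s) = x (s + len s) := by by_cases h : good s <;> simp [c', h, hcl]
  have hc'step s t (ht : t < len s) : dist (f (c' s t)) (c' s (t + 1)) < η s := by
    by_cases h : good s
    · simpa [c', h, ← add_assoc] using h (s + t) (by omega) (by omega)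
    · simpa [c', h] using hc s t ht
  refine ⟨fun j => c' (blockOf len j) (j - blockOf len j), fun j => ?_, fun j n hjn hj => ?_⟩
  all_goals
    have hle := blockOf_le (len := len) j
    have hlt := lt_blockOf_add_len hlen j
  · dsimp only
    rw [apply_blockOf_succ hlen c' fun s => (hc'l s).trans (hc'0 _).symm,
      show j + 1 - blockOf len j = j - blockOf len j + 1 by omega]
    exact hc'step _ _ (by omega)
  · have hbad : ¬good (blockOf len j) := fun hgood => hj <| by
      simp only [c', if_pos hgood, Nat.add_sub_cancel' hle]
    simp only [good] at hbad
    push Not at hbad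
    obtain ⟨i, hsi, his, hai⟩ := hbad
    have hlen_n := hlen_mono (hle.trans hjn.le)
    exact ⟨i, by omega, by omega, (hη (hle.trans hjn.le)).trans hai⟩

end Repair

theorem mul_ncard_inter_Iio_le_sum {J : Set ℕ} {a : ℕ → ℝ} (ha : ∀ i, 0 ≤ a i) {θ : ℝ}
    (hθ : 0 ≤ θ) {W n : ℕ} (hJ : ∀ j ∈ J, j < n → ∃ i, i < j + W ∧ j < i + W ∧ θ ≤ a i) :
    θ * (J ∩ Iio n).ncard ≤ 2 * W * ∑ i ∈ Finset.range (n + W), a i := by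
  classical
  set I := (Finset.range (n + W)).filter (θ ≤ a ·)
  have hsub : J ∩ Iio n ⊆ ↑(I.biUnion fun i => Finset.Ico (i + 1 - W) (i + W)) := by
    rintro j ⟨hj, hjn⟩
    obtain ⟨i, hij, hji, hai⟩ := hJ j hj hjn
    simp only [Finset.coe_biUnion, Finset.coe_Ico, mem_iUnion, mem_Ico, exists_prop]
    exact ⟨i, Finset.mem_filter.2 ⟨Finset.mem_range.2 (by simp at hjn; omega), hai⟩, by omega, hji⟩
  have hcard : (J ∩ Iio n).ncard ≤ I.card * (2 * W) := by
    refine (ncard_le_ncard hsub (Finset.finite_toSet _)).trans ?_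
    rw [ncard_coe_finset]
    exact Finset.card_biUnion_le_card_mul _ _ _ fun i _ => by simp only [Nat.card_Ico]; omega
  have hmarkov : I.card • θ ≤ ∑ i ∈ Finset.range (n + W), a i :=
    (Finset.card_nsmul_le_sum I a θ fun i hi => (Finset.mem_filter.1 hi).2).trans
      (Finset.sum_le_sum_of_subset_of_nonneg (Finset.filter_subset _ _) fun i _ _ => ha i)
  rw [nsmul_eq_mul] at hmarkov
  calc θ * (J ∩ Iio n).ncard ≤ θ * (I.card * (2 * W) : ℕ) := by gcongr
    _ = 2 * W * (I.card * θ) := by push_cast; ring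
    _ ≤ 2 * W * ∑ i ∈ Finset.range (n + W), a i := by gcongr

theorem AsympAvgPseudoOrbit.eventually_sum_le {X : Type*} [MetricSpace X] {f : X → X}
    {x : ℕ → X} (hx : AsympAvgPseudoOrbit f x) (W : ℕ) {ε : ℝ} (hε : 0 < ε) :
    ∀ᶠ n in atTop, ∑ i ∈ Finset.range (n + W), dist (f (x i)) (x (i + 1)) ≤ ε * n := by
  have hshift := (tendsto_add_atTop_nat W).eventually (hx.eventually (gt_mem_nhds (half_pos hε)))
  filter_upwards [hshift, eventually_ge_atTop (max W 1)] with n hn hnW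
  have hpos : (0 : ℝ) < (n + W : ℕ) := by exact_mod_cast (show 0 < n + W by omega)
  have hWn : ((n + W : ℕ) : ℝ) ≤ 2 * n := by push_cast; exact_mod_cast (show n + W ≤ 2 * n by omega)
  rw [div_lt_iff₀ hpos] at hn
  nlinarith

theorem asympPseudoOrbit_from_asympAvgPseudoOrbit_general
    {X : Type*} [MetricSpace X] [CompactSpace X]
    (f : X → X) (hcm : ChainMixing f)
    (x : ℕ → X) (hx : AsympAvgPseudoOrbit f x) :
    ∃ y : ℕ → X,
      Tendsto (fun i : ℕ => dist (f (y i)) (y (i + 1))) atTop (nhds 0) ∧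
      HasDensity {j : ℕ | x j ≠ y j} 0 := by
  set δ : ℕ → ℝ := fun k => 1 / ((k : ℝ) + 1)
  have hδpos k : 0 < δ k := by positivity
  have hδanti : Antitone δ := fun k l hkl =>
    one_div_le_one_div_of_le (by positivity) (by simpa using hkl)
  obtain ⟨N, hNmono, hNpos, hchain⟩ := hcm.exists_monotone_chainLength hδpos
  -- `L` grows so slowly that the level-`L n` repairs below `n` cost at most `δ (L n) * n` indices
  obtain ⟨L, hLmono, hLtop, hLsum⟩ := exists_monotone_tendsto_atTop_eventually_diag fun k =>
    hx.eventually_sum_le (N k) (ε := δ k ^ 2 / (2 * N k)) (by have := hNpos k; positivity)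
  obtain ⟨y, hstep, hbad⟩ := exists_blockwise_repair (fun s => hNpos (L s)) (hNmono.comp hLmono)
    (hδanti.comp_monotone hLmono) x fun s => hchain _ _ _
  have hδL : Tendsto (fun n => δ (L n)) atTop (𝓝 0) :=
    tendsto_one_div_add_atTop_nhds_zero_nat.comp hLtop
  refine ⟨y, squeeze_zero (fun _ => dist_nonneg) (fun j => (hstep j).le)
    (hδL.comp (tendsto_blockOf fun s => hNpos _)), ?_⟩
  refine squeeze_zero' (Eventually.of_forall fun n => by positivity) ?_ hδL
  filter_upwards [hLsum, eventually_gt_atTop 0] with n hsum hn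
  have hcount := mul_ncard_inter_Iio_le_sum (J := {j | x j ≠ y j}) (fun _ => dist_nonneg)
    (hδpos (L n)).le fun j hj hjn => hbad j n hjn hj
  have hW : (0 : ℝ) < N (L n) := by exact_mod_cast hNpos _
  rw [div_le_iff₀ (by exact_mod_cast hn)]
  refine le_of_mul_le_mul_left (hcount.trans ?_) (hδpos _)
  calc _ ≤ 2 * (N (L n) : ℝ) * (δ (L n) ^ 2 / (2 * N (L n)) * n) := by gcongr
    _ = δ (L n) * (δ (L n) * n) := by field_simp

/-- In a chain mixing compact system, every asymptotic average
pseudo-orbit agrees, outside a set of indices of density zero, with an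
asymptotic pseudo-orbit. -/
theorem asympPseudoOrbit_from_asympAvgPseudoOrbit
    {X : Type*} [MetricSpace X] [CompactSpace X]
    (f : X → X) (hf : Continuous f) (hcm : ChainMixing f)
    (x : ℕ → X) (hx : AsympAvgPseudoOrbit f x) :
    ∃ y : ℕ → X,
      Tendsto (fun i : ℕ => dist (f (y i)) (y (i + 1))) atTop (nhds 0) ∧
      HasDensity {j : ℕ | x j ≠ y j} 0 :=
  asympPseudoOrbit_from_asympAvgPseudoOrbit_general f hcm x hx
end

section
/- Let X be a compact metric space and let f : X → X be a continuous map with the almost specification property with mistake function g and function k_g. Given a sequence of positive real numbers {ε_i}_{i≥1}, a sequence of points {x_i}_{i≥1} in X, and a sequence of integers {n_i}_{i≥0} with n_0 = 0 and n_i ≥ k_g(ε_i) for all i ≥ 1, set l_i = n_0 + n_1 + ⋯ + n_{i−1} for i ≥ 1. Then there exists a point z ∈ X such that for every j ≥ 1, f^{l_j}(z) lies in the closure of B_{n_j}(g; x_j, ε_j). -/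
open Filter Metric Set MeasureTheory Topology

/-! For each `m`, the almost specification property gives a point tracing the first `m`
blocks. The points whose `j`-th block lies in the closure of the `j`-th mistake Bowen ball form
closed sets with the finite intersection property, so compactness yields a point in all of them. -/

theorem CompactSpace.exists_forall_mem_closure_of_finset {X Y ι : Type*}
    [TopologicalSpace X] [CompactSpace X] [TopologicalSpace Y]
    {φ : ι → X → Y} (hφ : ∀ j, Continuous (φ j)) {A : ι → Set Y}
    (h : ∀ s : Finset ι, ∃ z, ∀ j ∈ s, φ j z ∈ A j) :
    ∃ z, ∀ j, φ j z ∈ closure (A j) := by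
  obtain ⟨z, hz⟩ := CompactSpace.iInter_nonempty (t := fun j => φ j ⁻¹' closure (A j))
    (fun j => isClosed_closure.preimage (hφ j)) fun s => by
      obtain ⟨z, hz⟩ := h s
      exact ⟨z, mem_iInter₂.2 fun j hj => subset_closure (hz j hj)⟩
  exact ⟨z, mem_iInter.1 hz⟩

theorem Finset.sum_range_eq_sum_Ico_one {M : Type*} [AddCommMonoid M] {a : ℕ → M}
    (h0 : a 0 = 0) (j : ℕ) : ∑ s ∈ Finset.range j, a s = ∑ s ∈ Finset.Ico 1 j, a s := by
  rcases Nat.eq_zero_or_pos j with rfl | hj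
  · simp
  · rw [Finset.range_eq_Ico, Finset.sum_eq_sum_Ico_succ_bot hj, h0, zero_add]

theorem AlmostSpecWith.exists_forall_le {X : Type*} [MetricSpace X] {f : X → X}
    {g : ℕ → ℝ → ℕ} {kg : ℝ → ℕ} (hspec : AlmostSpecWith f g kg)
    {ε : ℕ → ℝ} (hε : ∀ i : ℕ, 1 ≤ i → 0 < ε i) (x : ℕ → X) {nseq : ℕ → ℕ}
    (h0 : nseq 0 = 0) (hn : ∀ i : ℕ, 1 ≤ i → kg (ε i) ≤ nseq i) (m : ℕ) :
    ∃ z : X, ∀ j, 1 ≤ j → j ≤ m →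
      f^[∑ s ∈ Finset.range j, nseq s] z ∈ mistakeBowenBall f g (nseq j) (x j) (ε j) := by
  obtain ⟨z, hz⟩ := hspec (m + 1) (by omega) ε x nseq
    (fun j hj _ => hε j hj) (fun j hj _ => hn j hj)
  exact ⟨z, fun j hj hjm => by
    rw [Finset.sum_range_eq_sum_Ico_one h0]; exact hz j hj (by omega)⟩

theorem almostSpec_infinite_general
    {X : Type*} [MetricSpace X] [CompactSpace X]
    (f : X → X) (hf : Continuous f)
    (g : ℕ → ℝ → ℕ) (kg : ℝ → ℕ)
    (hspec : AlmostSpecWith f g kg)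
    (ε : ℕ → ℝ) (hε : ∀ i : ℕ, 1 ≤ i → 0 < ε i)
    (x : ℕ → X) (nseq : ℕ → ℕ) (h0 : nseq 0 = 0)
    (hn : ∀ i : ℕ, 1 ≤ i → kg (ε i) ≤ nseq i) :
    ∃ z : X, ∀ j : ℕ, 1 ≤ j →
      f^[∑ s ∈ Finset.range j, nseq s] z ∈
        closure (mistakeBowenBall f g (nseq j) (x j) (ε j)) := by
  -- index the blocks `j ≥ 1` by `i = j - 1`
  obtain ⟨z, hz⟩ := CompactSpace.exists_forall_mem_closure_of_finset
    (φ := fun i : ℕ => f^[∑ s ∈ Finset.range (i + 1), nseq s]) (fun _ => hf.iterate _)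
    (A := fun i => mistakeBowenBall f g (nseq (i + 1)) (x (i + 1)) (ε (i + 1))) fun s => by
      obtain ⟨z, hz⟩ := hspec.exists_forall_le hε x h0 hn (s.sup id + 1)
      exact ⟨z, fun i hi => hz (i + 1) (by omega) (by simpa using Finset.le_sup (f := id) hi)⟩
  refine ⟨z, fun j hj => ?_⟩
  obtain ⟨i, rfl⟩ := Nat.exists_eq_add_of_le' hj
  exact hz i

/-- Infinite version of the almost specification property, with
tracing in closures of mistake Bowen balls. -/
theorem almostSpec_infinite
    {X : Type*} [MetricSpace X] [CompactSpace X]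
    (f : X → X) (hf : Continuous f)
    (g : ℕ → ℝ → ℕ) (ε₀ : ℝ) (kg : ℝ → ℕ)
    (hg : IsMistakeFun g ε₀) (hspec : AlmostSpecWith f g kg)
    (ε : ℕ → ℝ) (hε : ∀ i : ℕ, 1 ≤ i → 0 < ε i)
    (x : ℕ → X) (nseq : ℕ → ℕ) (h0 : nseq 0 = 0)
    (hn : ∀ i : ℕ, 1 ≤ i → kg (ε i) ≤ nseq i) :
    ∃ z : X, ∀ j : ℕ, 1 ≤ j →
      f^[∑ s ∈ Finset.range j, nseq s] z ∈
        closure (mistakeBowenBall f g (nseq j) (x j) (ε j)) :=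
  almostSpec_infinite_general f hf g kg hspec ε hε x nseq h0 hn
end

section
/- Let (X,f) be a dynamical system with X a compact metric space and f : X → X continuous with the average shadowing property. Let p, q ∈ X and let A, B ⊆ ℕ be sets with positive upper asymptotic density. Then for every ε > 0 there exist a point z ∈ X and integers a_0 < b_0 < a_1 < b_1 < ⋯ such that for every i ∈ ℕ: a_i ∈ A, b_i ∈ B, d(f^{a_i}(z), f^{a_i}(p)) < ε, and d(f^{b_i}(z), f^{b_i}(q)) < ε. -/
open Filter Metric Set MeasureTheory Topology

/-!
Follow the orbit of `p` on the even blocks `[n j, n (j + 1))` and the orbit of `q` on the odd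
ones. Consecutive switches are `L` apart, so for `L` large this concatenation is a
`δ`-average-pseudo-orbit; let `y` shadow it in average with error `ε β / 4`, where `β` is below
both densities. The switch times are chosen so that `4 n j ≤ β n (j + 1)` and `A` (on even
blocks) or `B` (on odd blocks) has at least `β n (j + 1)` elements below `n (j + 1)`. By
Markov's inequality fewer than `β n (j + 1) / 4` times below `n (j + 1)` are `ε`-far from the
pseudo-orbit, so some element of `A` (resp. `B`) in the `j`-th block is a time at which `y` is
`ε`-close to the orbit of `p` (resp. `q`). This gives infinitely many such times for `p` and for
`q`, and they can be interleaved.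
-/

open scoped Finset

section Counting

theorem card_filter_range_le_of_separated {Q : ℕ → Prop} [DecidablePred Q] {L : ℕ} (hL : 0 < L)
    (hQ : ∀ i j, Q i → Q j → i < j → i + L ≤ j) (N : ℕ) :
    #{i ∈ Finset.range N | Q i} ≤ N / L + 1 := by
  have hmono : StrictMonoOn (· / L) {i | Q i} := by
    intro i hi j hj hij
    show i / L < j / L
    have := Nat.div_le_div_right (c := L) (hQ i j hi hj hij)
    rw [Nat.add_div_right i hL] at this
    omega
  calc #{i ∈ Finset.range N | Q i} ≤ #(Finset.range (N / L + 1)) :=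
        Finset.card_le_card_of_injOn (· / L)
          (fun i hi => by
            simp only [Finset.coe_filter, Finset.mem_range, Set.mem_ofPred_eq, Finset.coe_range,
              Set.mem_Iio] at hi ⊢
            exact Nat.lt_succ_of_le (Nat.div_le_div_right hi.1.le))
          (hmono.injOn.mono fun i hi => (Finset.mem_filter.1 hi).2)
    _ = N / L + 1 := Finset.card_range _

theorem exists_mem_Ico_of_card_le {C B : ℕ → Prop} [DecidablePred C] [DecidablePred B] {β : ℝ}
    {s N : ℕ} (hC : β * N ≤ #{a ∈ Finset.range N | C a}) (hs : 4 * s ≤ β * N)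
    (hB : 4 * #{a ∈ Finset.range N | B a} < β * N) : ∃ a ∈ Finset.Ico s N, C a ∧ ¬ B a := by
  by_contra! hno
  have hsub : {a ∈ Finset.range N | C a} ⊆ Finset.range s ∪ {a ∈ Finset.range N | B a} := by
    intro a ha
    rw [Finset.mem_filter, Finset.mem_range] at ha
    rw [Finset.mem_union, Finset.mem_range, Finset.mem_filter, Finset.mem_range]
    by_cases has : a < s
    · exact Or.inl has
    · exact Or.inr ⟨ha.1, hno a (Finset.mem_Ico.2 ⟨not_lt.1 has, ha.1⟩) ha.2⟩
  have hcard : (#{a ∈ Finset.range N | C a} : ℝ) ≤ s + #{a ∈ Finset.range N | B a} := by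
    exact_mod_cast (Finset.card_le_card hsub).trans
      ((Finset.card_union_le _ _).trans_eq (by rw [Finset.card_range]))
  have : (0 : ℝ) ≤ #{a ∈ Finset.range N | B a} := Nat.cast_nonneg _
  linarith

theorem frequently_le_card_of_lt_upperDensity {C : Set ℕ} [DecidablePred (· ∈ C)] {c : ℝ}
    (hc : c < upperDensity C) : ∃ᶠ N in atTop, c * N ≤ #{a ∈ Finset.range N | a ∈ C} := by
  have hcount : ∀ N, (C ∩ Iio N).ncard = #{a ∈ Finset.range N | a ∈ C} := fun N => by
    rw [← Set.ncard_coe_finset]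
    congr 1
    ext
    simp [and_comm]
  refine (frequently_lt_of_lt_limsup (isCoboundedUnder_le_of_le atTop fun _ => by positivity)
    hc).mono fun N hN => ?_
  rcases N.eq_zero_or_pos with rfl | hN0
  · simp
  · rw [← hcount]
    exact ((lt_div_iff₀ (by exact_mod_cast hN0)).1 hN).le

theorem exists_interleaved_of_frequently {P Q : ℕ → Prop} (hP : ∃ᶠ n in atTop, P n)
    (hQ : ∃ᶠ n in atTop, Q n) :
    ∃ a b : ℕ → ℕ, (∀ i, a i < b i ∧ b i < a (i + 1)) ∧ ∀ i, P (a i) ∧ Q (b i) := by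
  choose nextP hnextP using frequently_atTop.1 hP
  choose nextQ hnextQ using frequently_atTop.1 hQ
  let a : ℕ → ℕ := fun i => Nat.rec (nextP 0) (fun _ ai => nextP (nextQ (ai + 1) + 1)) i
  refine ⟨a, fun i => nextQ (a i + 1), fun i => ⟨(hnextQ _).1, (hnextP _).1⟩,
    fun i => ⟨?_, (hnextQ _).2⟩⟩
  cases i <;> exact (hnextP _).2

theorem frequently_of_eventually_exists_ge {u : ℕ → ℕ} (hu : Tendsto u atTop atTop)
    {P : ℕ → Prop} (h : ∀ᶠ k in atTop, ∃ a, u k ≤ a ∧ P a) : ∃ᶠ a in atTop, P a :=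
  frequently_atTop.2 fun m =>
    let ⟨_, ⟨a, hua, ha⟩, hk⟩ := (h.and (hu.eventually_ge_atTop m)).exists
    ⟨a, hk.trans hua, ha⟩

theorem exists_switch_times {C : ℕ → Set ℕ} [∀ j, DecidablePred (· ∈ C j)] {β : ℝ} (hβ : 0 < β)
    (hC : ∀ j, β < upperDensity (C j)) (L : ℕ) :
    ∃ n : ℕ → ℕ, n 0 = 0 ∧ ∀ j, n j + L ≤ n (j + 1) ∧ 4 * n j ≤ β * n (j + 1) ∧
      β * n (j + 1) ≤ #{a ∈ Finset.range (n (j + 1)) | a ∈ C j} := by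
  have hnext : ∀ j s, ∃ t : ℕ, s + L ≤ t ∧ 4 * s ≤ β * t ∧
      β * t ≤ #{a ∈ Finset.range t | a ∈ C j} := fun j s =>
    (((eventually_ge_atTop (s + L)).and
      ((tendsto_natCast_atTop_atTop.const_mul_atTop hβ).eventually_ge_atTop _)).and_frequently
      (frequently_le_card_of_lt_upperDensity (hC j))).exists.imp fun _ ⟨⟨h₁, h₂⟩, h₃⟩ =>
      ⟨h₁, h₂, h₃⟩
  choose next hnext using hnext
  exact ⟨fun j => Nat.rec 0 (fun j s => next j s) j, rfl, fun j => hnext _ _⟩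

end Counting

section Blocks

variable {α : Type*} {n : ℕ → ℕ}

/-- For strictly increasing `n` with `n 0 = 0`, the unique `j` with `n j ≤ a < n (j + 1)`. -/
def blockIndex (n : ℕ → ℕ) (a : ℕ) : ℕ := Nat.findGreatest (fun j => n j ≤ a) a

theorem blockIndex_eq (hn : StrictMono n) {a j : ℕ} (h₁ : n j ≤ a) (h₂ : a < n (j + 1)) :
    blockIndex n a = j :=
  Nat.findGreatest_eq_iff.2 ⟨hn.le_apply.trans h₁, fun _ => h₁,
    fun _ hjk _ hk => (h₂.trans_le (hn.monotone hjk)).not_ge hk⟩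

theorem blockIndex_spec (hn : StrictMono n) (h0 : n 0 = 0) (a : ℕ) :
    n (blockIndex n a) ≤ a ∧ a < n (blockIndex n a + 1) := by
  have hle : n (blockIndex n a) ≤ a :=
    Nat.findGreatest_spec (P := fun j => n j ≤ a) (Nat.zero_le a) (h0.trans_le (Nat.zero_le a))
  refine ⟨hle, not_le.1 fun h => ?_⟩
  have := Nat.le_findGreatest (P := fun j => n j ≤ a) (hn.le_apply.trans h) h
  exact (Nat.lt_succ_self _).not_ge this

def concatOrbit (f : α → α) (n : ℕ → ℕ) (w : ℕ → α) (a : ℕ) : α :=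
  f^[a] (w (blockIndex n a))

theorem concatOrbit_eq (f : α → α) (hn : StrictMono n) (w : ℕ → α) {a j : ℕ} (h₁ : n j ≤ a)
    (h₂ : a < n (j + 1)) : concatOrbit f n w a = f^[a] (w j) := by
  rw [concatOrbit, blockIndex_eq hn h₁ h₂]

theorem succ_mem_range_of_concatOrbit_ne {f : α → α} (hn : StrictMono n) (h0 : n 0 = 0)
    {w : ℕ → α} {a : ℕ} (ha : f (concatOrbit f n w a) ≠ concatOrbit f n w (a + 1)) :
    a + 1 ∈ Set.range n := by
  obtain ⟨h₁, h₂⟩ := blockIndex_spec hn h0 a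
  by_contra hr
  have h₂' : a + 1 < n (blockIndex n a + 1) := lt_of_le_of_ne h₂ fun he => hr ⟨_, he.symm⟩
  rw [concatOrbit_eq f hn w h₁ h₂, concatOrbit_eq f hn w (h₁.trans a.le_succ) h₂',
    Function.iterate_succ_apply'] at ha
  exact ha rfl

end Blocks

section AverageShadowing

variable {X : Type*} [MetricSpace X] [BoundedSpace X] {f : X → X}

theorem dist_le_diam_univ_s17 (u v : X) : dist u v ≤ diam (univ : Set X) :=
  dist_le_diam_of_mem (Bornology.IsBounded.all _) trivial trivial

theorem avgPseudoOrbit_of_separated_jumps {x : ℕ → X} {δ : ℝ} {L : ℕ} (hL : 0 < L)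
    (hLδ : 2 * diam (univ : Set X) < δ * L)
    (hsep : ∀ i j, f (x i) ≠ x (i + 1) → f (x j) ≠ x (j + 1) → i < j → i + L ≤ j) :
    AvgPseudoOrbit f δ x := by
  classical
  set D := diam (univ : Set X)
  have hD : 0 ≤ D := diam_nonneg
  refine ⟨L, hL, fun N hN k => ?_⟩
  have hL' : (0 : ℝ) < L := by exact_mod_cast hL
  have hN' : (L : ℝ) ≤ N := by exact_mod_cast hN
  set J := {i ∈ Finset.range N | f (x (i + k)) ≠ x (i + k + 1)}
  have hJ : (#J : ℝ) ≤ N / L + 1 := by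
    have := card_filter_range_le_of_separated hL (fun i j hi hj hij => by
      have := hsep _ _ hi hj (by omega : i + k < j + k); omega) N
    calc (#J : ℝ) ≤ ((N / L : ℕ) : ℝ) + 1 := by exact_mod_cast this
      _ ≤ N / L + 1 := by gcongr; exact Nat.cast_div_le
  have hsum : ∑ i ∈ Finset.range N, dist (f (x (i + k))) (x (i + k + 1)) ≤ D * (N / L + 1) := by
    rw [← Finset.sum_filter_of_ne (p := fun i => f (x (i + k)) ≠ x (i + k + 1))
      fun i _ h he => h (he ▸ dist_self _)]
    calc _ ≤ #J • D := Finset.sum_le_card_nsmul _ _ _ fun i _ => dist_le_diam_univ_s17 _ _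
      _ = D * #J := by rw [nsmul_eq_mul, mul_comm]
      _ ≤ D * (N / L + 1) := mul_le_mul_of_nonneg_left hJ hD
  have hbound : D * (N / L + 1) < δ * N := by
    rw [show D * (N / L + 1) = D * (N + L) / L by field_simp, div_lt_iff₀ hL']
    nlinarith
  rw [div_lt_iff₀ (by linarith)]
  exact hsum.trans_lt hbound

theorem exists_gap_avgPseudoOrbit_concatOrbit {δ : ℝ} (hδ : 0 < δ) :
    ∃ L > 0, ∀ (n : ℕ → ℕ) (w : ℕ → X), n 0 = 0 → (∀ j, n j + L ≤ n (j + 1)) →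
      AvgPseudoOrbit f δ (concatOrbit f n w) := by
  obtain ⟨L, hL⟩ := exists_nat_gt (2 * diam (univ : Set X) / δ)
  have hL0 : 0 < L := by exact_mod_cast (div_nonneg (by positivity) hδ.le).trans_lt hL
  rw [div_lt_iff₀ hδ] at hL
  refine ⟨L, hL0, fun n w h0 hgap => ?_⟩
  have hn : StrictMono n := strictMono_nat_of_lt_succ fun j => by linarith [hgap j]
  refine avgPseudoOrbit_of_separated_jumps hL0 (by linarith) fun i k hi hk hik => ?_
  obtain ⟨j, hj⟩ := succ_mem_range_of_concatOrbit_ne hn h0 hi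
  obtain ⟨l, hl⟩ := succ_mem_range_of_concatOrbit_ne hn h0 hk
  have hjl : j + 1 ≤ l := hn.lt_iff_lt.1 (by omega)
  have := (hgap j).trans (hn.monotone hjl)
  omega

theorem eventually_card_filter_le_dist_lt {x : ℕ → X} {y : X} {ε θ : ℝ} (hε : 0 < ε)
    (hy : ShadowedInAvg f (ε * θ) x y) :
    ∀ᶠ N in atTop, (#{a ∈ Finset.range N | ε ≤ dist (f^[a] y) (x a)} : ℝ) < θ * N := by
  have hbdd : IsBoundedUnder (· ≤ ·) atTop
      fun N : ℕ => (∑ i ∈ Finset.range N, dist (f^[i] y) (x i)) / N := by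
    refine isBoundedUnder_of ⟨diam (univ : Set X), fun N => div_le_of_le_mul₀ N.cast_nonneg
      diam_nonneg ?_⟩
    simpa [mul_comm] using Finset.sum_le_card_nsmul (Finset.range N) _ _
      fun i _ => dist_le_diam_univ_s17 (f^[i] y) (x i)
  filter_upwards [eventually_lt_of_limsup_lt hy hbdd, eventually_gt_atTop 0] with N hN hN0
  rw [div_lt_iff₀ (by exact_mod_cast hN0)] at hN
  have hmarkov : ε * #{a ∈ Finset.range N | ε ≤ dist (f^[a] y) (x a)} ≤
      ∑ i ∈ Finset.range N, dist (f^[i] y) (x i) :=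
    calc _ = #{a ∈ Finset.range N | ε ≤ dist (f^[a] y) (x a)} • ε := by
          rw [nsmul_eq_mul, mul_comm]
      _ ≤ ∑ i ∈ Finset.range N with ε ≤ dist (f^[i] y) (x i), dist (f^[i] y) (x i) :=
          Finset.card_nsmul_le_sum _ _ _ fun i hi => (Finset.mem_filter.1 hi).2
      _ ≤ _ := Finset.sum_le_sum_of_subset_of_nonneg (Finset.filter_subset _ _)
          fun _ _ _ => dist_nonneg
  exact lt_of_mul_lt_mul_left (by linarith) hε.le

theorem eventually_exists_dist_iterate_lt {n : ℕ → ℕ} (hn : StrictMono n) {C : ℕ → Set ℕ}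
    [∀ j, DecidablePred (· ∈ C j)] {β ε : ℝ} (hε : 0 < ε) (hsmall : ∀ j, 4 * n j ≤ β * n (j + 1))
    (hdense : ∀ j, β * n (j + 1) ≤ #{a ∈ Finset.range (n (j + 1)) | a ∈ C j})
    {w : ℕ → X} {y : X} (hy : ShadowedInAvg f (ε * (β / 4)) (concatOrbit f n w) y) :
    ∀ᶠ j in atTop, ∃ a, n j ≤ a ∧ a ∈ C j ∧ dist (f^[a] y) (f^[a] (w j)) < ε := by
  filter_upwards [(hn.tendsto_atTop.comp (tendsto_add_atTop_nat 1)).eventually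
    (eventually_card_filter_le_dist_lt hε hy)] with j hj
  obtain ⟨a, ha, haC, hgood⟩ :=
    exists_mem_Ico_of_card_le (hdense j) (hsmall j) (by dsimp at hj; linarith)
  rw [Finset.mem_Ico] at ha
  rw [concatOrbit_eq f hn w ha.1 ha.2, not_le] at hgood
  exact ⟨a, ha.1, haC, hgood⟩

end AverageShadowing

theorem avgShadowing_interleaved_visits_general
    {X : Type*} [MetricSpace X] [CompactSpace X]
    (f : X → X) (h : AvgShadowing f)
    (p q : X) (A B : Set ℕ)
    (hA : 0 < upperDensity A) (hB : 0 < upperDensity B) :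
    ∀ ε : ℝ, 0 < ε → ∃ (z : X) (a b : ℕ → ℕ),
      (∀ i : ℕ, a i < b i ∧ b i < a (i + 1)) ∧
      ∀ i : ℕ, a i ∈ A ∧ b i ∈ B ∧
        dist (f^[a i] z) (f^[a i] p) < ε ∧
        dist (f^[b i] z) (f^[b i] q) < ε := by
  classical
  intro ε hε
  obtain ⟨β, hβ, hβAB⟩ := exists_between (lt_min hA hB)
  rw [lt_min_iff] at hβAB
  obtain ⟨δ, hδ, hshadow⟩ := h (ε * (β / 4)) (by positivity)
  obtain ⟨L, hL, hconcat⟩ := exists_gap_avgPseudoOrbit_concatOrbit (f := f) hδ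
  let C : ℕ → Set ℕ := fun j => if Even j then A else B
  let w : ℕ → X := fun j => if Even j then p else q
  have hC : ∀ j, β < upperDensity (C j) := fun j => by
    dsimp only [C]
    split_ifs
    exacts [hβAB.1, hβAB.2]
  obtain ⟨n, h0, hn⟩ := exists_switch_times hβ hC L
  have hmono : StrictMono n := strictMono_nat_of_lt_succ fun j => by linarith [(hn j).1]
  obtain ⟨y, hy⟩ := hshadow _ (hconcat n w h0 fun j => (hn j).1)
  have htrack :=
    eventually_exists_dist_iterate_lt hmono hε (fun j => (hn j).2.1) (fun j => (hn j).2.2) hy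
  have hev : Tendsto (fun k => 2 * k) atTop atTop := tendsto_id.const_mul_atTop' two_pos
  have hodd : Tendsto (fun k => 2 * k + 1) atTop atTop := tendsto_add_atTop_nat 1 |>.comp hev
  have hpA : ∃ᶠ a in atTop, a ∈ A ∧ dist (f^[a] y) (f^[a] p) < ε :=
    frequently_of_eventually_exists_ge (hmono.tendsto_atTop.comp hev)
      ((hev.eventually htrack).mono fun k hk => by simpa [C, w] using hk)
  have hqB : ∃ᶠ b in atTop, b ∈ B ∧ dist (f^[b] y) (f^[b] q) < ε :=
    frequently_of_eventually_exists_ge (hmono.tendsto_atTop.comp hodd)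
      ((hodd.eventually htrack).mono fun k hk => by simpa [C, w] using hk)
  obtain ⟨a, b, hab, hvisit⟩ := exists_interleaved_of_frequently hpA hqB
  exact ⟨y, a, b, hab, fun i => ⟨(hvisit i).1.1, (hvisit i).2.1, (hvisit i).1.2, (hvisit i).2.2⟩⟩

/-- Interleaved approach to the orbits of two points along sets
of positive upper density, for maps with the average shadowing property. -/
theorem avgShadowing_interleaved_visits
    {X : Type*} [MetricSpace X] [CompactSpace X]
    (f : X → X) (hf : Continuous f) (h : AvgShadowing f)
    (p q : X) (A B : Set ℕ)
    (hA : 0 < upperDensity A) (hB : 0 < upperDensity B) :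
    ∀ ε : ℝ, 0 < ε → ∃ (z : X) (a b : ℕ → ℕ),
      (∀ i : ℕ, a i < b i ∧ b i < a (i + 1)) ∧
      ∀ i : ℕ, a i ∈ A ∧ b i ∈ B ∧
        dist (f^[a i] z) (f^[a i] p) < ε ∧
        dist (f^[b i] z) (f^[b i] q) < ε :=
  avgShadowing_interleaved_visits_general f h p q A B hA hB
end
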